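/- arXiv:2102.03838 — 2 statements merged into one kernel-verified Lean document; each statement's English description precedes it below -/
import Mathlib

section
/- If every separable closed subspace W of a Banach space X is contained in a closed subspace Z of X which is a Grothendieck space, then X itself is a Grothendieck space. -/
open Filter Topology ZeroAtInfty

/-- A sequence in the dual of `X` converges in the weak* topology. -/
def WeakStarConv (X : Type*) [SeminormedAddCommGroup X] [NormedSpace ℝ X]
    (f : ℕ → X →L[ℝ] ℝ) (g : X →L[ℝ] ℝ) : Prop :=
  ∀ x : X, Tendsto (fun n => f n x) atTop (𝓝 (g x))

/-- A sequence in a normed space `Z` converges in the weak topology. -/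
def WeakConv (Z : Type*) [SeminormedAddCommGroup Z] [NormedSpace ℝ Z]
    (f : ℕ → Z) (g : Z) : Prop :=
  ∀ φ : Z →L[ℝ] ℝ, Tendsto (fun n => φ (f n)) atTop (𝓝 (φ g))

/-- A Banach space is Grothendieck if weak*-convergent sequences in its dual converge weakly. -/
def IsGrothendieck (X : Type*) [SeminormedAddCommGroup X] [NormedSpace ℝ X] : Prop :=
  ∀ (f : ℕ → X →L[ℝ] ℝ) (g : X →L[ℝ] ℝ),
    WeakStarConv X f g → WeakConv (X →L[ℝ] ℝ) f g

/-- The weak topology of a normed space. -/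
def weakTopology (Y : Type*) [SeminormedAddCommGroup Y] [NormedSpace ℝ Y] :
    TopologicalSpace Y :=
  TopologicalSpace.induced (fun (y : Y) => fun f : Y →L[ℝ] ℝ => f y) Pi.topologicalSpace

/-- An operator is weakly compact if the image of the closed unit ball is
relatively compact in the weak topology. -/
def IsWeaklyCompactOp {X Y : Type*} [SeminormedAddCommGroup X] [NormedSpace ℝ X]
    [SeminormedAddCommGroup Y] [NormedSpace ℝ Y] (T : X →L[ℝ] Y) : Prop :=
  @IsCompact Y (weakTopology Y) (@closure Y (weakTopology Y) (⇑T '' Metric.closedBall 0 1))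

/-!
Let `f n → g` weak* in `X*` and `Φ ∈ X**`. By Goldstine's theorem, in its finite form obtained
from Hahn–Banach, there is a bounded sequence `x k` in `X` with `g (x k) → Φ g` and
`f n (x k) → Φ (f n)` for every `n`. The `x k` span a separable closed subspace, which lies in a
Grothendieck subspace `Z`. A weak* cluster point `Ψ ∈ Z**` of the `x k` (Banach–Alaoglu) agrees
with `Φ` on the restrictions of `g` and of the `f n`; these restrictions converge weak*, hence
weakly, in `Z*`, so `Φ (f n) = Ψ (f n|Z) → Ψ (g|Z) = Φ g`.
-/

section Goldstine

variable {X : Type*} [NormedAddCommGroup X] [NormedSpace ℝ X]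

theorem bidual_apply_comp_pi {m : ℕ} (Φ : (X →L[ℝ] ℝ) →L[ℝ] ℝ) (c : Fin m → X →L[ℝ] ℝ)
    (f : (Fin m → ℝ) →L[ℝ] ℝ) : Φ (f.comp (ContinuousLinearMap.pi c)) = f fun i => Φ (c i) := by
  have hf : ∀ y, f y = ∑ i, y i • f (fun j => if i = j then 1 else 0) :=
    f.toLinearMap.pi_apply_eq_sum_univ
  have hcomp : f.comp (ContinuousLinearMap.pi c) =
      ∑ i, f (fun j => if i = j then 1 else 0) • c i := by
    ext x
    rw [ContinuousLinearMap.comp_apply, hf]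
    simp [mul_comm]
  rw [hcomp, hf]
  simp [mul_comm]

theorem exists_norm_le_forall_abs_sub_lt {m : ℕ} (Φ : (X →L[ℝ] ℝ) →L[ℝ] ℝ)
    (c : Fin m → X →L[ℝ] ℝ) {M δ : ℝ} (hM : ‖Φ‖ < M) (hδ : 0 < δ) :
    ∃ x : X, ‖x‖ ≤ M ∧ ∀ i, |c i x - Φ (c i)| < δ := by
  set L : X →L[ℝ] (Fin m → ℝ) := ContinuousLinearMap.pi c
  set v : Fin m → ℝ := fun i => Φ (c i)
  have hv : v ∈ closure (L '' Metric.closedBall 0 M) := by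
    by_contra hv
    -- Separating `v` from the image of the ball gives `F` with `M * ‖F‖ ≤ u < Φ F ≤ ‖Φ‖ * ‖F‖`.
    obtain ⟨f, u, hfK, hfv⟩ := geometric_hahn_banach_closed_point
      ((convex_closedBall (0 : X) M).linear_image L.toLinearMap).closure isClosed_closure hv
    set F := f.comp L
    have hF : ∀ x ∈ Metric.closedBall (0 : X) M, F x < u := fun x hx =>
      hfK _ (subset_closure ⟨x, hx, rfl⟩)
    have hM0 : 0 < M := (norm_nonneg Φ).trans_lt hM
    have hu : 0 < u := by simpa using hF 0 (by simp [hM0.le])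
    have hFnorm : ‖F‖ ≤ u / M := F.opNorm_bound_of_ball_bound hM0 u fun x hx => by
      have hneg := hF (-x) (by simpa using hx)
      rw [map_neg] at hneg
      exact abs_le.2 ⟨by linarith, (hF x hx).le⟩
    have : u < M * (u / M) := calc
      u < f v := hfv
      _ = Φ F := (bidual_apply_comp_pi Φ c f).symm
      _ ≤ ‖Φ‖ * ‖F‖ := (le_abs_self _).trans (Φ.le_opNorm F)
      _ ≤ ‖Φ‖ * (u / M) := by gcongr
      _ < M * (u / M) := by gcongr
    rw [mul_div_cancel₀ u hM0.ne'] at this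
    exact this.false
  obtain ⟨_, ⟨x, hx, rfl⟩, hdist⟩ := Metric.mem_closure_iff.1 hv δ hδ
  refine ⟨x, mem_closedBall_zero_iff.1 hx, fun i => ?_⟩
  rw [abs_sub_comm, ← Real.dist_eq]
  exact (dist_le_pi_dist v (L x) i).trans_lt hdist

theorem exists_seq_norm_le_tendsto_bidual (Φ : (X →L[ℝ] ℝ) →L[ℝ] ℝ) (c : ℕ → X →L[ℝ] ℝ)
    {M : ℝ} (hM : ‖Φ‖ < M) :
    ∃ x : ℕ → X, (∀ k, ‖x k‖ ≤ M) ∧ ∀ i, Tendsto (fun k => c i (x k)) atTop (𝓝 (Φ (c i))) := by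
  choose x hx_norm hx_close using fun k : ℕ =>
    exists_norm_le_forall_abs_sub_lt Φ (fun i : Fin (k + 1) => c i) hM Nat.one_div_pos_of_nat
  refine ⟨x, hx_norm, fun i => ?_⟩
  rw [tendsto_iff_dist_tendsto_zero]
  refine squeeze_zero' (Eventually.of_forall fun k => dist_nonneg) ?_
    tendsto_one_div_add_atTop_nhds_zero_nat
  filter_upwards [eventually_ge_atTop i] with k hk
  simpa [Real.dist_eq] using (hx_close k ⟨i, Nat.lt_succ_of_le hk⟩).le

end Goldstine

theorem exists_bidual_eq_of_tendsto {Z : Type*} [NormedAddCommGroup Z] [NormedSpace ℝ Z]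
    {z : ℕ → Z} {M : ℝ} (hz : ∀ k, ‖z k‖ ≤ M) :
    ∃ Ψ : (Z →L[ℝ] ℝ) →L[ℝ] ℝ,
      ∀ q L, Tendsto (fun k => q (z k)) atTop (𝓝 L) → Ψ q = L := by
  set e : ℕ → WeakDual ℝ (Z →L[ℝ] ℝ) := fun k =>
    StrongDual.toWeakDual (NormedSpace.inclusionInDoubleDual ℝ Z (z k))
  have he : ∀ k, e k ∈ WeakDual.toStrongDual ⁻¹' Metric.closedBall 0 M := fun k =>
    (dist_zero_right (E := StrongDual ℝ (Z →L[ℝ] ℝ)) _).trans_le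
      ((NormedSpace.double_dual_bound ℝ Z (z k)).trans (hz k))
  obtain ⟨Ψ, -, hΨ⟩ := (WeakDual.isCompact_closedBall 0 M).exists_mapClusterPt
    (f := atTop) (tendsto_principal.2 (Eventually.of_forall he))
  refine ⟨WeakDual.toStrongDual Ψ, fun q L hq => ?_⟩
  exact eq_of_nhds_neBot
    ((hΨ.tendsto_comp ((WeakDual.eval_continuous q).tendsto Ψ)).clusterPt.mono hq)

theorem grothendieck_of_separable_subspaces_general (X : Type*)
    [NormedAddCommGroup X] [NormedSpace ℝ X]
    (h : ∀ W : Submodule ℝ X, IsClosed (W : Set X) →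
      TopologicalSpace.SeparableSpace W →
      ∃ Z : Submodule ℝ X, IsClosed (Z : Set X) ∧ W ≤ Z ∧ IsGrothendieck Z) :
    IsGrothendieck X := by
  intro f g hfg Φ
  obtain ⟨x, hx_norm, hx⟩ :=
    exists_seq_norm_le_tendsto_bidual Φ (fun n => Nat.casesOn n g f) (lt_add_one _)
  set W := (Submodule.span ℝ (Set.range x)).topologicalClosure
  have hW_sep : TopologicalSpace.SeparableSpace W := by
    refine TopologicalSpace.IsSeparable.separableSpace ?_
    rw [Submodule.topologicalClosure_coe]
    exact (Set.countable_range x).isSeparable.span.closure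
  obtain ⟨Z, -, hWZ, hZ⟩ := h W (Submodule.isClosed_topologicalClosure _) hW_sep
  have hxZ : ∀ k, x k ∈ Z := fun k =>
    hWZ (Submodule.le_topologicalClosure _ (Submodule.subset_span ⟨k, rfl⟩))
  obtain ⟨Ψ, hΨ⟩ := exists_bidual_eq_of_tendsto (z := fun k => (⟨x k, hxZ k⟩ : Z)) hx_norm
  have hweak := hZ (fun n => (f n).comp Z.subtypeL) (g.comp Z.subtypeL) (fun z => hfg z) Ψ
  rwa [hΨ _ _ (hx 0), funext fun n => hΨ _ _ (hx (n + 1))] at hweak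

/-- The Grothendieck property is separably determined: if every separable closed subspace
of `X` is contained in a closed Grothendieck subspace, then `X` is Grothendieck. -/
theorem grothendieck_of_separable_subspaces (X : Type*)
    [NormedAddCommGroup X] [NormedSpace ℝ X] [CompleteSpace X]
    (h : ∀ W : Submodule ℝ X, IsClosed (W : Set X) →
      TopologicalSpace.SeparableSpace W →
      ∃ Z : Submodule ℝ X, IsClosed (Z : Set X) ∧ W ≤ Z ∧ IsGrothendieck Z) :
    IsGrothendieck X :=
  grothendieck_of_separable_subspaces_general X h
end

section
/- A Grothendieck Banach space with the Dunford–Pettis property admits no Schauder decomposition. -/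
open Filter Topology ZeroAtInfty

/-- `X` has the Dunford–Pettis property: weakly compact operators from `X` take weakly
convergent sequences to norm convergent sequences. -/
def DunfordPettis (X : Type*) [SeminormedAddCommGroup X] [NormedSpace ℝ X] : Prop :=
  ∀ (Y : Type) [NormedAddCommGroup Y] [NormedSpace ℝ Y] [CompleteSpace Y]
    (T : X →L[ℝ] Y), IsWeaklyCompactOp T →
      ∀ (x : ℕ → X) (x₀ : X), WeakConv X x x₀ →
        Tendsto (fun n => T (x n)) atTop (𝓝 (T x₀))

/-!
Let `(P i)` be a Schauder decomposition with partial sums `Q k = ∑ i < k, P i`, and pick unit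
vectors `x i` with `P i (x i) = x i` and functionals `φ i` of norm one with `φ i (x i) = 1`.

The `x i` are weakly null: if `Φ ∈ X**` is a weak* limit of the `x i` along a nonprincipal
ultrafilter, then `Φ (g ∘ Q k) = 0` for every `g` and `k`, while `g ∘ Q k → g` weak*, hence weakly
by the Grothendieck property, so `Φ g = 0`. The functionals `φ i ∘ P i` are weak* null, hence
weakly null. Weakly null `(f n)` in `X*` make `v ↦ (f n v)ₙ` a weakly compact operator into `c₀`
(its bidual extension `F ↦ (F (f n))ₙ` is weak*-to-weak continuous on balls, because functionals
on `c₀` are given by `ℓ¹` sequences), so the Dunford–Pettis property forces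
`φ i (P i (x i)) → 0`, although all these values are `1`.
-/

namespace ZeroAtInftyContinuousMap

section Normed

variable {α β : Type*} [TopologicalSpace α] [NormedAddCommGroup β]

theorem norm_apply_le_norm (f : C₀(α, β)) (x : α) : ‖f x‖ ≤ ‖f‖ := by
  rw [← norm_toBCF_eq_norm]
  exact f.toBCF.norm_coe_le_norm x

theorem norm_le_of_forall_norm_apply_le {f : C₀(α, β)} {C : ℝ} (hC : 0 ≤ C)
    (h : ∀ x, ‖f x‖ ≤ C) : ‖f‖ ≤ C := by
  rw [← norm_toBCF_eq_norm]
  exact (BoundedContinuousFunction.norm_le hC).2 h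

variable (𝕜 : Type*) [NormedField 𝕜] [NormedSpace 𝕜 β]

noncomputable def evalCLM (x : α) : C₀(α, β) →L[𝕜] β :=
  LinearMap.mkContinuous
    { toFun := fun f => f x
      map_add' := fun f g => add_apply (x := x) f g
      map_smul' := fun c f => smul_apply c f x }
    1 fun f => by simpa using norm_apply_le_norm f x

@[simp] theorem evalCLM_apply (x : α) (f : C₀(α, β)) : evalCLM 𝕜 x f = f x := rfl

end Normed

def ofTendstoAtTop {β : Type*} [TopologicalSpace β] [Zero β] (y : ℕ → β)
    (hy : Tendsto y atTop (𝓝 0)) : C₀(ℕ, β) :=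
  ⟨⟨y, continuous_of_discreteTopology⟩, by rwa [cocompact_eq_atTop]⟩

@[simp] theorem ofTendstoAtTop_apply {β : Type*} [TopologicalSpace β] [Zero β] (y : ℕ → β)
    (hy : Tendsto y atTop (𝓝 0)) (n : ℕ) : ofTendstoAtTop y hy n = y n := rfl

theorem tendsto_atTop_zero {β : Type*} [TopologicalSpace β] [Zero β] (y : C₀(ℕ, β)) :
    Tendsto y atTop (𝓝 0) := by
  simpa only [cocompact_eq_atTop] using zero_at_infty y

def single (n : ℕ) : C₀(ℕ, ℝ) :=
  ofTendstoAtTop (Pi.single n 1) <| tendsto_const_nhds.congr' <| by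
    filter_upwards [eventually_gt_atTop n] with m hm
    simp [hm.ne']

theorem single_apply (n m : ℕ) : single n m = if m = n then 1 else 0 := by
  simp [single, Pi.single_apply]

theorem sum_smul_single_apply (s : Finset ℕ) (c : ℕ → ℝ) (m : ℕ) :
    (∑ n ∈ s, c n • single n) m = if m ∈ s then c m else 0 := by
  rw [← evalCLM_apply ℝ, map_sum]
  simp [single_apply]

theorem tendsto_sum_range_smul_single (y : C₀(ℕ, ℝ)) :
    Tendsto (fun N => ∑ n ∈ Finset.range N, y n • single n) atTop (𝓝 y) := by
  rw [Metric.tendsto_atTop]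
  intro ε hε
  obtain ⟨N, hN⟩ := Metric.tendsto_atTop.1 y.tendsto_atTop_zero (ε / 2) (half_pos hε)
  refine ⟨N, fun K hK => (dist_eq_norm _ y).trans_lt ?_⟩
  refine (norm_le_of_forall_norm_apply_le (half_pos hε).le fun m => ?_).trans_lt (half_lt_self hε)
  rw [sub_apply, sum_smul_single_apply]
  by_cases hm : m < K
  · simp [hm, (half_pos hε).le]
  · simpa [hm] using (hN m (by omega)).le

theorem sum_abs_apply_single_le_norm (ψ : C₀(ℕ, ℝ) →L[ℝ] ℝ) (s : Finset ℕ) :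
    ∑ n ∈ s, |ψ (single n)| ≤ ‖ψ‖ := by
  set z := ∑ n ∈ s, (SignType.sign (ψ (single n)) : ℝ) • single n
  have hz : ‖z‖ ≤ 1 := norm_le_of_forall_norm_apply_le zero_le_one fun m => by
    rw [sum_smul_single_apply]
    split_ifs
    · rcases SignType.sign (ψ (single m)) with _ | _ | _ <;> simp
    · simp
  calc ∑ n ∈ s, |ψ (single n)| = ψ z := by simp [z, map_sum, sign_mul_self]
    _ ≤ ‖ψ‖ * ‖z‖ := (le_abs_self _).trans (ψ.le_opNorm z)
    _ ≤ ‖ψ‖ := mul_le_of_le_one_right (norm_nonneg ψ) hz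

theorem summable_abs_apply_single (ψ : C₀(ℕ, ℝ) →L[ℝ] ℝ) :
    Summable fun n => |ψ (single n)| :=
  summable_of_sum_range_le (fun _ => abs_nonneg _) fun _ => sum_abs_apply_single_le_norm ψ _

theorem hasSum_apply_single_mul (ψ : C₀(ℕ, ℝ) →L[ℝ] ℝ) (y : C₀(ℕ, ℝ)) :
    HasSum (fun n => ψ (single n) * y n) (ψ y) := by
  have hsummable : Summable fun n => ψ (single n) * y n :=
    .of_norm_bounded ((summable_abs_apply_single ψ).mul_right ‖y‖) fun n => by
      simpa [abs_mul] using mul_le_mul_of_nonneg_left (norm_apply_le_norm y n) (abs_nonneg _)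
  refine hsummable.hasSum_iff_tendsto_nat.2 ?_
  simpa [Function.comp_def, map_sum, mul_comm] using
    (ψ.continuous.tendsto y).comp (tendsto_sum_range_smul_single y)

end ZeroAtInftyContinuousMap

section WeakTopology

variable {Y : Type*} [NormedAddCommGroup Y] [NormedSpace ℝ Y]

theorem continuous_weakTopology_iff {α : Type*} [TopologicalSpace α] {g : α → Y} :
    Continuous[_, weakTopology Y] g ↔ ∀ φ : Y →L[ℝ] ℝ, Continuous fun a => φ (g a) := by
  rw [weakTopology, continuous_induced_rng, continuous_pi_iff]
  rfl

theorem t2Space_weakTopology : @T2Space Y (weakTopology Y) :=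
  @T2Space.of_injective_continuous _ _ (weakTopology Y) _ _ _
    (fun _ _ h => SeparatingDual.eq_iff_forall_dual_eq.2 (congrFun h)) continuous_induced_dom

end WeakTopology

namespace WeakConv

variable {Z : Type*} [NormedAddCommGroup Z] [NormedSpace ℝ Z] {z : ℕ → Z}

open ZeroAtInftyContinuousMap

theorem exists_norm_le {z₀ : Z} (h : WeakConv Z z z₀) : ∃ C, ∀ n, ‖z n‖ ≤ C := by
  obtain ⟨C, hC⟩ := banach_steinhaus (g := fun n => NormedSpace.inclusionInDoubleDual ℝ Z (z n))
    fun φ => (h φ).norm.bddAbove_range.imp fun _ hC n => hC ⟨n, rfl⟩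
  exact ⟨C, fun n => ((NormedSpace.inclusionInDoubleDualLi ℝ).norm_map (z n)).symm.trans_le (hC n)⟩

noncomputable def dualToC0 (h : WeakConv Z z 0) : (Z →L[ℝ] ℝ) →L[ℝ] C₀(ℕ, ℝ) :=
  LinearMap.mkContinuousOfExistsBound
    { toFun := fun φ => ofTendstoAtTop (fun n => φ (z n)) (by simpa using h φ)
      map_add' := fun _ _ => rfl
      map_smul' := fun _ _ => rfl }
    (by
      obtain ⟨C, hC⟩ := h.exists_norm_le
      refine ⟨C, fun φ => norm_le_of_forall_norm_apply_le
        (mul_nonneg ((norm_nonneg _).trans (hC 0)) (norm_nonneg φ)) fun n => ?_⟩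
      rw [mul_comm]
      exact (φ.le_opNorm (z n)).trans (by gcongr; exact hC n))

theorem isCompact_image_dualToC0_closedBall (h : WeakConv Z z 0) (r : ℝ) :
    @IsCompact _ (weakTopology _) (h.dualToC0 '' Metric.closedBall 0 r) := by
  obtain ⟨C, hC⟩ := h.exists_norm_le
  set K := WeakDual.toStrongDual ⁻¹' Metric.closedBall (0 : Z →L[ℝ] ℝ) r
  have hcont : @ContinuousOn _ _ _ (weakTopology _)
      (fun F : WeakDual ℝ Z => h.dualToC0 (WeakDual.toStrongDual F)) K := by
    refine (@continuousOn_iff_continuous_domRestrict _ _ _ (weakTopology _) _ _).2 <|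
      continuous_weakTopology_iff.2 fun ψ => ?_
    have hψ : ∀ F : K, ψ (h.dualToC0 (WeakDual.toStrongDual F.1)) =
        ∑' n, ψ (single n) * F.1 (z n) := fun F => (hasSum_apply_single_mul ψ _).tsum_eq.symm
    simp only [Set.domRestrict_apply, hψ]
    refine continuous_tsum (fun n => continuous_const.mul
      ((WeakDual.eval_continuous (z n)).comp continuous_subtype_val))
      ((summable_abs_apply_single ψ).mul_right (r * C)) fun n F => ?_
    have hF : ‖WeakDual.toStrongDual F.1‖ ≤ r := mem_closedBall_zero_iff.1 F.2
    rw [norm_mul, Real.norm_eq_abs]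
    gcongr
    exact ((WeakDual.toStrongDual F.1).le_opNorm (z n)).trans
      (mul_le_mul hF (hC n) (norm_nonneg _) ((norm_nonneg _).trans hF))
  have := @IsCompact.image_of_continuousOn _ _ _ (weakTopology _) _ _
    (WeakDual.isCompact_closedBall 0 r) hcont
  rwa [← Set.image_image (g := h.dualToC0),
    Set.image_preimage_eq _ WeakDual.toStrongDual.surjective] at this

end WeakConv

section DunfordPettis

variable {X : Type*} [NormedAddCommGroup X] [NormedSpace ℝ X]

theorem WeakConv.isWeaklyCompactOp_dualToC0_comp {f : ℕ → X →L[ℝ] ℝ}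
    (h : WeakConv (X →L[ℝ] ℝ) f 0) :
    IsWeaklyCompactOp (h.dualToC0.comp (NormedSpace.inclusionInDoubleDual ℝ X)) := by
  refine @IsCompact.closure_of_subset _ (weakTopology _)
    (@T2Space.r1Space _ (weakTopology _) t2Space_weakTopology) _ _
    (h.isCompact_image_dualToC0_closedBall 1) ?_
  rintro _ ⟨v, hv, rfl⟩
  exact ⟨_, mem_closedBall_zero_iff.2 ((NormedSpace.double_dual_bound ℝ X v).trans
    (mem_closedBall_zero_iff.1 hv)), rfl⟩

theorem DunfordPettis.tendsto_apply_apply_zero (hDP : DunfordPettis X) {x : ℕ → X}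
    {f : ℕ → X →L[ℝ] ℝ} (hx : WeakConv X x 0) (hf : WeakConv (X →L[ℝ] ℝ) f 0) :
    Tendsto (fun n => f n (x n)) atTop (𝓝 0) := by
  have hT := hDP _ _ hf.isWeaklyCompactOp_dualToC0_comp x 0 hx
  rw [map_zero] at hT
  refine squeeze_zero_norm (fun n => ?_) (tendsto_zero_iff_norm_tendsto_zero.1 hT)
  exact (hf.dualToC0.comp (NormedSpace.inclusionInDoubleDual ℝ X) (x n)).norm_apply_le_norm n

end DunfordPettis

theorem IsGrothendieck.weakConv_zero_of_eventually_apply_eq_zero {X : Type*}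
    [NormedAddCommGroup X] [NormedSpace ℝ X] (hX : IsGrothendieck X) {Q : ℕ → X →L[ℝ] X}
    (hQ : ∀ v, Tendsto (fun k => Q k v) atTop (𝓝 v)) {x : ℕ → X} {C : ℝ} (hC : ∀ j, ‖x j‖ ≤ C)
    (hQx : ∀ k, ∀ᶠ j in atTop, Q k (x j) = 0) : WeakConv X x 0 := by
  intro g
  rw [map_zero, tendsto_iff_ultrafilter]
  intro U hU
  let ι : ℕ → WeakDual ℝ (X →L[ℝ] ℝ) :=
    fun j => StrongDual.toWeakDual (NormedSpace.inclusionInDoubleDual ℝ X (x j))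
  obtain ⟨Φ, -, hΦ⟩ := (WeakDual.isCompact_closedBall 0 C).ultrafilter_le_nhds (U.map ι) <|
    le_principal_iff.2 <| Ultrafilter.mem_map.2 <| univ_mem' fun j =>
      mem_closedBall_zero_iff.2 ((NormedSpace.double_dual_bound ℝ X (x j)).trans (hC j))
  have hlim : ∀ φ : X →L[ℝ] ℝ, Tendsto (fun j => φ (x j)) U (𝓝 (Φ φ)) := fun φ =>
    ((WeakDual.eval_continuous φ).tendsto Φ).comp hΦ
  have hΦQ : ∀ k, Φ (g.comp (Q k)) = 0 := fun k =>
    tendsto_nhds_unique (hlim _) <| tendsto_const_nhds.congr' <|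
      ((hQx k).filter_mono hU).mono fun j hj => by simp [hj]
  have hΦg : Φ g = 0 := by
    refine tendsto_nhds_unique (hX (fun k => g.comp (Q k)) g
      (fun v => (g.continuous.tendsto v).comp (hQ v)) (WeakDual.toStrongDual Φ)) ?_
    simp [hΦQ]
  simpa [hΦg] using hlim g

section SchauderDecomposition

open Finset

theorem tendsto_zero_of_tendsto_sum_range {E : Type*} [AddCommGroup E] [TopologicalSpace E]
    [IsTopologicalAddGroup E] {a : ℕ → E} {s : E}
    (h : Tendsto (fun n => ∑ i ∈ range n, a i) atTop (𝓝 s)) : Tendsto a atTop (𝓝 0) := by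
  simpa [sum_range_succ_sub_sum] using (h.comp (tendsto_add_atTop_nat 1)).sub h

theorem comp_self_eq_of_tendsto_sum_range {R E : Type*} [Semiring R] [TopologicalSpace E]
    [T2Space E] [AddCommMonoid E] [Module R E] {P : ℕ → E →L[R] E}
    (horth : ∀ i j, i ≠ j → (P i).comp (P j) = 0)
    (hsum : ∀ x, Tendsto (fun n => ∑ i ∈ range n, P i x) atTop (𝓝 x)) (i : ℕ) :
    (P i).comp (P i) = P i := by
  ext v
  refine tendsto_nhds_unique (tendsto_const_nhds.congr' ?_)
    (((P i).continuous.tendsto v).comp (hsum v))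
  filter_upwards [eventually_gt_atTop i] with n hn
  rw [Function.comp_apply, map_sum, sum_eq_single_of_mem i (mem_range.2 hn) fun j _ hji => by
    rw [← ContinuousLinearMap.comp_apply, horth i j hji.symm, zero_apply]]
  rfl

theorem ContinuousLinearMap.exists_norm_eq_one_apply_eq_self {𝕜 E : Type*} [RCLike 𝕜]
    [NormedAddCommGroup E] [NormedSpace 𝕜 E] (P : E →L[𝕜] E) (hP : P ≠ 0)
    (hidem : P.comp P = P) : ∃ x, ‖x‖ = 1 ∧ P x = x := by
  obtain ⟨v, hv⟩ : ∃ v, P v ≠ 0 := by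
    by_contra! h
    exact hP (ext h)
  refine ⟨(‖P v‖⁻¹ : 𝕜) • P v, norm_smul_inv_norm hv, ?_⟩
  rw [map_smul, ← comp_apply, hidem]

end SchauderDecomposition

theorem no_schauderDecomposition_of_grothendieck_dunfordPettis_general (X : Type*)
    [NormedAddCommGroup X] [NormedSpace ℝ X]
    (hX : IsGrothendieck X) (hDP : DunfordPettis X) :
    ¬ ∃ P : ℕ → X →L[ℝ] X, (∀ i, P i ≠ 0) ∧
        (∀ i j, i ≠ j → (P i).comp (P j) = 0) ∧
        (∀ x : X, Tendsto (fun n => ∑ i ∈ Finset.range n, P i x) atTop (𝓝 x)) := by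
  rintro ⟨P, hP0, horth, hsum⟩
  choose x hx_norm hx_fix using fun i =>
    (P i).exists_norm_eq_one_apply_eq_self (hP0 i) (comp_self_eq_of_tendsto_sum_range horth hsum i)
  choose φ hφ_norm hφx using fun i => exists_dual_vector ℝ (x i) (by simp [hx_norm i])
  have hx_weak : WeakConv X x 0 := by
    refine hX.weakConv_zero_of_eventually_apply_eq_zero (Q := fun k => ∑ i ∈ Finset.range k, P i)
      (by simpa [sum_apply] using hsum) (fun j => (hx_norm j).le) fun k => ?_
    filter_upwards [eventually_ge_atTop k] with j hj
    refine (sum_apply _ _ _).trans (Finset.sum_eq_zero fun i hi => ?_)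
    rw [← hx_fix j, ← ContinuousLinearMap.comp_apply,
      horth i j ((Finset.mem_range.1 hi).trans_le hj).ne]
    rfl
  have hf_weak : WeakConv (X →L[ℝ] ℝ) (fun i => (φ i).comp (P i)) 0 := by
    refine hX _ _ fun v => squeeze_zero_norm (fun i => ?_)
      (tendsto_zero_iff_norm_tendsto_zero.1 (tendsto_zero_of_tendsto_sum_range (hsum v)))
    simpa [hφ_norm] using (φ i).le_opNorm (P i v)
  have h := hDP.tendsto_apply_apply_zero hx_weak hf_weak
  simp only [ContinuousLinearMap.comp_apply, hx_fix, hφx, hx_norm] at h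
  exact one_ne_zero (tendsto_nhds_unique tendsto_const_nhds h)

/-- A Grothendieck space with the Dunford–Pettis property admits no Schauder
decomposition. -/
theorem no_schauderDecomposition_of_grothendieck_dunfordPettis (X : Type*)
    [NormedAddCommGroup X] [NormedSpace ℝ X] [CompleteSpace X]
    (hX : IsGrothendieck X) (hDP : DunfordPettis X) :
    ¬ ∃ P : ℕ → X →L[ℝ] X, (∀ i, P i ≠ 0) ∧
        (∀ i j, i ≠ j → (P i).comp (P j) = 0) ∧
        (∀ x : X, Tendsto (fun n => ∑ i ∈ Finset.range n, P i x) atTop (𝓝 x)) :=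
  no_schauderDecomposition_of_grothendieck_dunfordPettis_general X hX hDP
end
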